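/- Let Υ be a row-strict composition tableau with minimal entry m̄ in row j_Υ. Then the set of Springer inversions of Υ whose first coordinate is m̄ equals {(m̄, j) : β_j > β_{j_Υ}, or β_j = β_{j_Υ} and j < j_Υ}, and the full inversion set decomposes as a disjoint union Inv(Υ) = Inv_{m̄}(Υ) ⊔ Inv(η(Υ)). -/
import Mathlib


open Finset

/-- The content interval `[n-m+1, n]` of a shifted tableau. -/
def content (n m : ℕ) : Finset ℕ := Finset.Icc (n - m + 1) n

lemma content_mono (n m : ℕ) : content n (m - 1) ⊆ content n m := by
  intro x hx
  simp only [content, Finset.mem_Icc] at *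
  omega

/-- A (shifted) row-strict composition tableau of shape `β` (a weak composition of `m` with
`k` parts) and content `[n-m+1, n]`, encoded by the assignment of each entry to its row.
(The filling of each row is determined by its set of entries, since entries strictly decrease
from left to right in each row.) -/
abbrev RSCT (n m k : ℕ) (β : Fin k → ℕ) : Type :=
  {row : {i : ℕ // i ∈ content n m} → Fin k //
    ∀ j : Fin k, (Finset.univ.filter fun i => row i = j).card = β j}

/-- The (0-indexed) column of entry `i`: the number of larger entries in its own row. -/
def colOf {n m k : ℕ} {β : Fin k → ℕ} (T : RSCT n m k β)
    (i : {a : ℕ // a ∈ content n m}) : ℕ :=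
  (Finset.univ.filter fun i' : {a : ℕ // a ∈ content n m} =>
    T.val i' = T.val i ∧ (i : ℕ) < (i' : ℕ)).card

/-- `(i, j)` is a Springer inversion of `T`: there is an entry `i' > i` in row `j` that is
either directly above `i` in the same column, or in a column strictly to the right of the
column of `i`. -/
def isInv {n m k : ℕ} {β : Fin k → ℕ} (T : RSCT n m k β) (i : ℕ) (j : Fin k) : Prop :=
  ∃ (hi : i ∈ content n m) (i' : {a : ℕ // a ∈ content n m}),
    T.val i' = j ∧ i < (i' : ℕ) ∧
      (colOf T ⟨i, hi⟩ < colOf T i' ∨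
        (colOf T i' = colOf T ⟨i, hi⟩ ∧ j < T.val ⟨i, hi⟩))

/-- The finite set of Springer inversions of `T`. -/
noncomputable def InvF {n m k : ℕ} {β : Fin k → ℕ} (T : RSCT n m k β) :
    Finset (ℕ × Fin k) :=
  @Finset.filter (ℕ × Fin k) (fun p => isInv T p.1 p.2) (Classical.decPred _)
    ((content n m) ×ˢ (Finset.univ : Finset (Fin k)))

/-- The inversion vector of `T`: `invVec T i` is the number of Springer inversions of `T`
with first coordinate `i`. -/
noncomputable def invVec {n m k : ℕ} {β : Fin k → ℕ} (T : RSCT n m k β) (i : ℕ) : ℕ :=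
  ((InvF T).filter fun p => p.1 = i).card

/-- `etaRel T T'` expresses that `T'` is obtained from `T` by removing the box containing
the minimal entry `n - m + 1` (which lies at the end of its row). -/
def etaRel {n m k : ℕ} {β β' : Fin k → ℕ} (T : RSCT n m k β)
    (T' : RSCT n (m - 1) k β') : Prop :=
  (∃ h : n - m + 1 ∈ content n m,
      β' = Function.update β (T.val ⟨n - m + 1, h⟩) (β (T.val ⟨n - m + 1, h⟩) - 1)) ∧
  ∀ (i : ℕ) (hi : i ∈ content n (m - 1)),
      T'.val ⟨i, hi⟩ = T.val ⟨i, content_mono n m hi⟩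
-- auxiliary lemmas
lemma aux_inj (A : Finset ℕ) : Set.InjOn (fun a => (A.filter (fun x => a < x)).card) A := by
  have key : ∀ a ∈ A, ∀ b ∈ A, a < b →
      (A.filter (fun x => b < x)).card < (A.filter (fun x => a < x)).card := by
    intro a ha b hb hab
    apply Finset.card_lt_card
    constructor
    · intro x hx
      simp only [Finset.mem_filter] at *
      exact ⟨hx.1, lt_trans hab hx.2⟩
    · intro hsub
      have : b ∈ A.filter (fun x => a < x) := by simp [hb, hab]
      have := hsub this
      simp at this
  intro a ha b hb hab
  simp only at hab
  rcases lt_trichotomy a b with h | h | h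
  · exact absurd hab (ne_of_gt (key a ha b hb h))
  · exact h
  · exact absurd hab (ne_of_gt (key b hb a ha h)).symm

lemma aux_lt (A : Finset ℕ) (a : ℕ) (ha : a ∈ A) :
    (A.filter (fun x => a < x)).card < A.card := by
  have hsub : A.filter (fun x => a < x) ⊆ A.erase a := by
    intro x hx
    simp only [Finset.mem_filter] at hx
    exact Finset.mem_erase.2 ⟨by omega, hx.1⟩
  calc (A.filter (fun x => a < x)).card ≤ (A.erase a).card := Finset.card_le_card hsub
    _ < A.card := Finset.card_erase_lt_of_mem ha

lemma aux_exists (A : Finset ℕ) (c : ℕ) :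
    (∃ a ∈ A, (A.filter (fun x => a < x)).card = c) ↔ c < A.card := by
  constructor
  · rintro ⟨a, ha, rfl⟩
    exact aux_lt A a ha
  · intro hc
    have himg : A.image (fun a => (A.filter (fun x => a < x)).card) = Finset.range A.card := by
      apply Finset.eq_of_subset_of_card_le
      · intro c hcm
        simp only [Finset.mem_image] at hcm
        obtain ⟨a, ha, rfl⟩ := hcm
        rw [Finset.mem_range]
        exact aux_lt A a ha
      · rw [Finset.card_range, Finset.card_image_of_injOn (aux_inj A)]
    have : c ∈ A.image (fun a => (A.filter (fun x => a < x)).card) := by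
      rw [himg, Finset.mem_range]; exact hc
    simpa using this

/-- The set of values in row `j` of `T`. -/
def rowSet {n m k : ℕ} {β : Fin k → ℕ} (T : RSCT n m k β) (j : Fin k) : Finset ℕ :=
  (Finset.univ.filter fun i' : {a : ℕ // a ∈ content n m} => T.val i' = j).image
    Subtype.val

lemma mem_rowSet {n m k : ℕ} {β : Fin k → ℕ} (T : RSCT n m k β) {j : Fin k} {a : ℕ} :
    a ∈ rowSet T j ↔ ∃ h : a ∈ content n m, T.val ⟨a, h⟩ = j := by
  simp only [rowSet, Finset.mem_image, Finset.mem_filter, Finset.mem_univ, true_and,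
    Subtype.exists]
  constructor
  · rintro ⟨b, hb, hbj, rfl⟩
    exact ⟨hb, hbj⟩
  · rintro ⟨h, hj⟩
    exact ⟨a, h, hj, rfl⟩

lemma card_rowSet {n m k : ℕ} {β : Fin k → ℕ} (T : RSCT n m k β) (j : Fin k) :
    (rowSet T j).card = β j := by
  rw [rowSet, Finset.card_image_of_injective _ Subtype.val_injective, T.2 j]

lemma colOf_eq {n m k : ℕ} {β : Fin k → ℕ} (T : RSCT n m k β)
    (i : {a : ℕ // a ∈ content n m}) :
    colOf T i = ((rowSet T (T.val i)).filter fun x => (i : ℕ) < x).card := by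
  rw [colOf, rowSet, Finset.filter_image]
  rw [Finset.card_image_of_injective _ Subtype.val_injective, Finset.filter_filter]

lemma exists_colOf {n m k : ℕ} {β : Fin k → ℕ} (T : RSCT n m k β) (j : Fin k) (c : ℕ) :
    (∃ i' : {a : ℕ // a ∈ content n m}, T.val i' = j ∧ colOf T i' = c) ↔ c < β j := by
  rw [← card_rowSet T j, ← aux_exists (rowSet T j) c]
  constructor
  · rintro ⟨i', hj, hc⟩
    refine ⟨(i' : ℕ), (mem_rowSet T).2 ⟨i'.2, by simpa using hj⟩, ?_⟩
    rw [colOf_eq, hj] at hc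
    exact hc
  · rintro ⟨a, ha, hc⟩
    obtain ⟨h, hj⟩ := (mem_rowSet T).1 ha
    refine ⟨⟨a, h⟩, hj, ?_⟩
    rw [colOf_eq, hj]
    exact hc

lemma colOf_lt {n m k : ℕ} {β : Fin k → ℕ} (T : RSCT n m k β)
    (i' : {a : ℕ // a ∈ content n m}) : colOf T i' < β (T.val i') := by
  exact (exists_colOf T (T.val i') (colOf T i')).1 ⟨i', rfl, rfl⟩
lemma mbar_mem {n m : ℕ} (hm1 : 1 ≤ m) (hmn : m ≤ n) : n - m + 1 ∈ content n m := by
  simp only [content, Finset.mem_Icc]; omega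

lemma colOf_mbar {n m k : ℕ} {β : Fin k → ℕ} (hm1 : 1 ≤ m) (hmn : m ≤ n)
    (T : RSCT n m k β) (h : n - m + 1 ∈ content n m) :
    colOf T ⟨n - m + 1, h⟩ = β (T.val ⟨n - m + 1, h⟩) - 1 := by
  rw [colOf_eq, ← card_rowSet T (T.val ⟨n - m + 1, h⟩)]
  congr 1
  have hmem : (n - m + 1) ∈ rowSet T (T.val ⟨n - m + 1, h⟩) := (mem_rowSet T).2 ⟨h, rfl⟩
  rw [← Finset.card_erase_of_mem hmem]
  congr 1
  ext x
  simp only [Finset.mem_filter, Finset.mem_erase, mem_rowSet]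
  constructor
  · rintro ⟨⟨hx, hxj⟩, hlt⟩
    exact ⟨by omega, hx, hxj⟩
  · rintro ⟨hne, hx, hxj⟩
    have : n - m + 1 ≤ x := by
      simp only [content, Finset.mem_Icc] at hx; omega
    exact ⟨⟨hx, hxj⟩, by omega⟩

lemma inv_mbar_iff {n m k : ℕ} {β : Fin k → ℕ} (hm1 : 1 ≤ m) (hmn : m ≤ n)
    (T : RSCT n m k β) (jU : Fin k) (hjU : jU = T.val ⟨n - m + 1, mbar_mem hm1 hmn⟩)
    (j : Fin k) :
    isInv T (n - m + 1) j ↔ (β jU < β j ∨ (β j = β jU ∧ j < jU)) := by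
  have hmem := mbar_mem hm1 hmn
  have hcol : colOf T ⟨n - m + 1, hmem⟩ = β jU - 1 := by
    rw [colOf_mbar hm1 hmn T hmem, ← hjU]
  have hβjU : 1 ≤ β jU := by
    have h2 : colOf T ⟨n - m + 1, hmem⟩ < β jU := by
      rw [hjU]; exact colOf_lt T _
    omega
  constructor
  · rintro ⟨hi, i', hji', hlt, hcase⟩
    have hb : colOf T i' < β j := by
      have := colOf_lt T i'
      rwa [hji'] at this
    rcases hcase with h1 | ⟨h2, h3⟩
    · have h1' : β jU - 1 < colOf T i' := by
        have hc : colOf T ⟨n - m + 1, hi⟩ = β jU - 1 := hcol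
        omega
      left; omega
    · have h2' : colOf T i' = β jU - 1 := by
        have hc : colOf T ⟨n - m + 1, hi⟩ = β jU - 1 := hcol
        omega
      have h3' : j < jU := by
        have : T.val ⟨n - m + 1, hi⟩ = jU := hjU.symm
        rwa [this] at h3
      have hle : β jU ≤ β j := by omega
      rcases lt_or_eq_of_le hle with h | h
      · exact Or.inl h
      · exact Or.inr ⟨h.symm, h3'⟩
  · have hne_of : ∀ i' : {a : ℕ // a ∈ content n m}, T.val i' = j → j ≠ jU →
        n - m + 1 < (i' : ℕ) := by
      intro i' hji' hne
      have hge : n - m + 1 ≤ (i' : ℕ) := by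
        have := i'.2
        simp only [content, Finset.mem_Icc] at this; omega
      rcases lt_or_eq_of_le hge with h | h
      · exact h
      · exfalso
        apply hne
        have heq : i' = ⟨n - m + 1, hmem⟩ := Subtype.ext h.symm
        rw [heq] at hji'
        exact (hjU.trans hji').symm
    rintro (h | ⟨h1, h2⟩)
    · obtain ⟨i', hji', hc⟩ := (exists_colOf T j (β jU)).2 (by omega)
      have hne : j ≠ jU := by
        intro he; rw [he] at h; omega
      refine ⟨hmem, i', hji', hne_of i' hji' hne, Or.inl ?_⟩
      rw [hcol, hc]; omega
    · obtain ⟨i', hji', hc⟩ := (exists_colOf T j (β jU - 1)).2 (by omega)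
      have hne : j ≠ jU := ne_of_lt h2
      refine ⟨hmem, i', hji', hne_of i' hji' hne, Or.inr ⟨by rw [hcol, hc], ?_⟩⟩
      rw [← hjU]; exact h2
section Eta
variable {n m k : ℕ} {β β' : Fin k → ℕ} (hm1 : 1 ≤ m) (hmn : m ≤ n)
  (Υ : RSCT n m k β) (Υ' : RSCT n (m - 1) k β') (hη : etaRel Υ Υ')

include hm1 hmn hη

lemma mem_content' {i : ℕ} (hi : i ∈ content n m) (hne : i ≠ n - m + 1) :
    i ∈ content n (m - 1) := by
  simp only [content, Finset.mem_Icc] at *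
  omega

omit hm1 hmn hη in
lemma not_mem_content' (hm1 : 1 ≤ m) (hmn : m ≤ n) :
    n - m + 1 ∉ content n (m - 1) := by
  simp only [content, Finset.mem_Icc]
  omega

lemma rowSet_filter_eta {i : ℕ} (hi : i ∈ content n (m - 1)) (j : Fin k) :
    (rowSet Υ' j).filter (fun x => i < x) = (rowSet Υ j).filter (fun x => i < x) := by
  have hige : n - m + 2 ≤ i := by
    simp only [content, Finset.mem_Icc] at hi; omega
  ext x
  simp only [Finset.mem_filter, mem_rowSet]
  constructor
  · rintro ⟨⟨hx, hxj⟩, hlt⟩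
    refine ⟨⟨content_mono n m hx, ?_⟩, hlt⟩
    rw [← hη.2 x hx]
    exact hxj
  · rintro ⟨⟨hx, hxj⟩, hlt⟩
    have hx' : x ∈ content n (m - 1) := by
      simp only [content, Finset.mem_Icc] at hx ⊢
      omega
    refine ⟨⟨hx', ?_⟩, hlt⟩
    rw [hη.2 x hx']
    exact hxj

lemma colOf_eta {i : ℕ} (hi : i ∈ content n (m - 1)) :
    colOf Υ' ⟨i, hi⟩ = colOf Υ ⟨i, content_mono n m hi⟩ := by
  rw [colOf_eq, colOf_eq, hη.2 i hi, rowSet_filter_eta hm1 hmn Υ Υ' hη hi]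

lemma isInv_eta {i : ℕ} (hi : i ∈ content n (m - 1)) (j : Fin k) :
    isInv Υ' i j ↔ isInv Υ i j := by
  constructor
  · rintro ⟨hi', i', hji', hlt, hcase⟩
    refine ⟨content_mono n m hi', ⟨(i' : ℕ), content_mono n m i'.2⟩, ?_, hlt, ?_⟩
    · rw [← hη.2 (i' : ℕ) i'.2]
      exact hji'
    · have hc1 : colOf Υ' ⟨i, hi'⟩ = colOf Υ ⟨i, content_mono n m hi'⟩ :=
        colOf_eta hm1 hmn Υ Υ' hη hi'
      have hc2 : colOf Υ' i' = colOf Υ ⟨(i' : ℕ), content_mono n m i'.2⟩ := by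
        have := colOf_eta hm1 hmn Υ Υ' hη i'.2
        simpa using this
      rcases hcase with h | ⟨h1, h2⟩
      · left; rw [← hc1, ← hc2]; exact h
      · refine Or.inr ⟨by rw [← hc1, ← hc2]; exact h1, ?_⟩
        rwa [hη.2 i hi'] at h2
  · rintro ⟨hi', i', hji', hlt, hcase⟩
    have hige : n - m + 2 ≤ i := by
      simp only [content, Finset.mem_Icc] at hi; omega
    have hi'mem : (i' : ℕ) ∈ content n (m - 1) := by
      have := i'.2
      simp only [content, Finset.mem_Icc] at *
      omega
    refine ⟨hi, ⟨(i' : ℕ), hi'mem⟩, ?_, hlt, ?_⟩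
    · rw [hη.2 (i' : ℕ) hi'mem]
      exact hji'
    · have hc1 : colOf Υ' ⟨i, hi⟩ = colOf Υ ⟨i, content_mono n m hi⟩ :=
        colOf_eta hm1 hmn Υ Υ' hη hi
      have hc2 : colOf Υ' ⟨(i' : ℕ), hi'mem⟩ = colOf Υ i' := by
        have := colOf_eta hm1 hmn Υ Υ' hη hi'mem
        rw [this]
      rcases hcase with h | ⟨h1, h2⟩
      · left
        rw [hc1, hc2]
        exact h
      · refine Or.inr ⟨by rw [hc1, hc2]; exact h1, ?_⟩
        rwa [hη.2 i hi]

omit hη in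
lemma not_isInv_eta (j : Fin k) : ¬ isInv Υ' (n - m + 1) j := by
  rintro ⟨hi, -⟩
  exact not_mem_content' hm1 hmn hi

end Eta

/-- Let `Υ` be a row-strict composition tableau with minimal entry
`m̄ = n - m + 1` in row `j_Υ`.  Then the Springer inversions of `Υ` with first coordinate `m̄`
are exactly the pairs `(m̄, j)` with `β_j > β_{j_Υ}`, or `β_j = β_{j_Υ}` and `j < j_Υ`;
and the full inversion set decomposes as the disjoint union
`Inv(Υ) = Inv_{m̄}(Υ) ⊔ Inv(η(Υ))`. -/
theorem stmt4 (n m k : ℕ) (hm1 : 1 ≤ m) (hmn : m ≤ n) (β : Fin k → ℕ)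
    (hsum : ∑ j, β j = m) (Υ : RSCT n m k β)
    (jU : Fin k)
    (hjU : jU = Υ.val ⟨n - m + 1, by simp only [content, Finset.mem_Icc]; omega⟩) :
    (∀ j : Fin k, isInv Υ (n - m + 1) j ↔ (β jU < β j ∨ (β j = β jU ∧ j < jU))) ∧
    (∀ (β' : Fin k → ℕ) (Υ' : RSCT n (m - 1) k β'), etaRel Υ Υ' →
      (∀ (i : ℕ) (j : Fin k),
          isInv Υ i j ↔
            ((i = n - m + 1 ∧ (β jU < β j ∨ (β j = β jU ∧ j < jU))) ∨ isInv Υ' i j)) ∧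
      (∀ j : Fin k, ¬ isInv Υ' (n - m + 1) j)) := by
  have hjU' : jU = Υ.val ⟨n - m + 1, mbar_mem hm1 hmn⟩ := hjU
  refine ⟨fun j => inv_mbar_iff hm1 hmn Υ jU hjU' j, ?_⟩
  intro β' Υ' hη
  refine ⟨?_, fun j => not_isInv_eta hm1 hmn Υ' j⟩
  intro i j
  by_cases hieq : i = n - m + 1
  · subst hieq
    rw [inv_mbar_iff hm1 hmn Υ jU hjU' j]
    constructor
    · intro h
      exact Or.inl ⟨rfl, h⟩
    · rintro (⟨-, h⟩ | h)
      · exact h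
      · exact absurd h (not_isInv_eta hm1 hmn Υ' j)
  · by_cases hic : i ∈ content n m
    · have hic' : i ∈ content n (m - 1) := mem_content' hm1 hmn Υ Υ' hη hic hieq
      rw [← isInv_eta hm1 hmn Υ Υ' hη hic' j]
      constructor
      · exact Or.inr
      · rintro (⟨heq, -⟩ | h)
        · exact absurd heq hieq
        · exact h
    · constructor
      · rintro ⟨hi, -⟩
        exact absurd hi hic
      · rintro (⟨heq, -⟩ | ⟨hi, -⟩)
        · exact absurd heq hieq
        · exact absurd (content_mono n m hi) hic
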